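/- The CAP instance constructed from the 3SAT formula φ (as in the context) admits a contiguous allocation (A_i) with v_i(A_i) ≥ 2 for every agent i (i.e., egalitarian social welfare at least 2) if and only if φ is satisfiable. Consequently, the maximum egalitarian social welfare of the constructed instance is at least 2 when φ is satisfiable, and at most 1 otherwise. -/

import Mathlib

/-!
A 3SAT formula over variables `Fin n` with clauses `C j = ℓ_{j,0} ∨ ℓ_{j,1} ∨ ℓ_{j,2}`,
where the literal `C j t : Fin n × Bool` is a variable with its sign
(`true` = positive).  `occCnt … true i` and `occCnt … false i` are the numbers
`o_i` and `ō_i` of occurrences of the literals `x_i` and `x̄_i`, and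
`occRank C j t` is the 0-indexed rank of the occurrence `(j, t)` among the
occurrences of its own literal.

The reduced CAP instance (0-indexed):
* Agents: variable agents `Sum.inl i`, divider agents `Sum.inr (Sum.inl d)`
  (`d : Fin (n+1)`), occurrence agents `Sum.inr (Sum.inr (j, t))`.
* Items `0, …, 6n + 10m + 1` on a path.  Block `V_i` starts at
  `s = blockStart … i = ∑_{p<i} 2(o_p + ō_p + 3)` and consists, in order, of a
  left assignment item `s`, `2o_i` positive occurrence items, a left assignment
  item `s + 2o_i + 1`, two divider items `s + 2o_i + 2`, `s + 2o_i + 3`, a right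
  assignment item `s + 2o_i + 4`, `2ō_i` negative occurrence items, and a right
  assignment item `s + 2(o_i + ō_i) + 5`.  Items `6n+6m` and `6n+6m+1` are two
  further divider items, and for each `j < m` the four clause items of `C j`
  are `6n+6m+2+4j, …, 6n+6m+5+4j`.
* Binary valuations `emaxVal`: variable agent `i` values exactly the four
  assignment items of `V_i`; divider agent `d < n` values exactly the two
  divider items of `V_d`, and `d = n` values exactly `6n+6m` and `6n+6m+1`;
  occurrence agent `(j, t)` with literal `(x, b)` of rank `h` values exactly
  the four clause items of `C j` and the `(2h)`-th and `(2h+1)`-st positive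
  (if `b`) or negative (if `¬b`) occurrence items of `V_x`.

A contiguous allocation is `A : Agent → Finset ℕ` with interval bundles,
pairwise disjoint, covering `Finset.range (6n + 10m + 2)`.
-/

def occRank {n m : ℕ} (C : Fin m → Fin 3 → Fin n × Bool) (j : Fin m) (t : Fin 3) : ℕ :=
  (Finset.univ.filter fun p : Fin m × Fin 3 =>
    C p.1 p.2 = C j t ∧ (p.1 < j ∨ (p.1 = j ∧ p.2 < t))).card

def occCnt (n m : ℕ) (C : Fin m → Fin 3 → Fin n × Bool) (b : Bool) (i : ℕ) : ℕ :=
  (Finset.univ.filter fun p : Fin m × Fin 3 =>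
    ((C p.1 p.2).1 : ℕ) = i ∧ (C p.1 p.2).2 = b).card

def blockStart (n m : ℕ) (C : Fin m → Fin 3 → Fin n × Bool) (i : ℕ) : ℕ :=
  ∑ p ∈ Finset.range i, 2 * (occCnt n m C true p + occCnt n m C false p + 3)

def emaxVal (n m : ℕ) (C : Fin m → Fin 3 → Fin n × Bool) :
    (Fin n ⊕ Fin (n + 1) ⊕ Fin m × Fin 3) → ℕ → ℕ
  | Sum.inl i, g =>
      let s := blockStart n m C i
      let oi := occCnt n m C true i
      let obi := occCnt n m C false i
      if g = s ∨ g = s + 2 * oi + 1 ∨ g = s + 2 * oi + 4 ∨ g = s + 2 * (oi + obi) + 5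
      then 1 else 0
  | Sum.inr (Sum.inl d), g =>
      if (d : ℕ) < n then
        (if g = blockStart n m C d + 2 * occCnt n m C true d + 2 ∨
            g = blockStart n m C d + 2 * occCnt n m C true d + 3 then 1 else 0)
      else (if g = 6 * n + 6 * m ∨ g = 6 * n + 6 * m + 1 then 1 else 0)
  | Sum.inr (Sum.inr (j, t)), g =>
      let i := ((C j t).1 : ℕ)
      let h := occRank C j t
      let base := if (C j t).2 then blockStart n m C i + 1 + 2 * h
                  else blockStart n m C i + 2 * occCnt n m C true i + 5 + 2 * h
      if g = base ∨ g = base + 1 ∨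
         (6 * n + 6 * m + 2 + 4 * (j : ℕ) ≤ g ∧ g < 6 * n + 6 * m + 2 + 4 * (j : ℕ) + 4)
      then 1 else 0

/-!
If every agent gets value `2`, the divider agent `d_i` owns both divider items of `V_i`, so the
interval of `x_i` stays on one side of them and, to collect two assignment items, covers that
whole side, occurrence items included; make the literal of that side false. A clause with three
false literals would leave its three occurrence agents only its four clause items, two each.

Conversely, from a satisfying assignment give every agent a core interval whose two ends it
values: `x_i` the side of its false literal, a satisfied occurrence its two occurrence items, and
the at most two unsatisfied occurrences of `C_j` consecutive pairs of its clause items. The cores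
are pairwise disjoint, and extending each of them up to the next one partitions the path.
-/

open Finset

lemma Finset.Icc_subset_of_mem_Ico {I : Finset ℕ} (hI : ∃ x y, I = Ico x y) {u v : ℕ}
    (hu : u ∈ I) (hv : v ∈ I) : Icc u v ⊆ I := by
  obtain ⟨x, y, rfl⟩ := hI
  intro g hg
  simp only [mem_Ico, mem_Icc] at *
  omega

lemma Finset.disjoint_Icc_of_lt_or_lt {a b c d : ℕ} (h : b < c ∨ d < a) :
    Disjoint (Icc a b) (Icc c d) := by
  rw [disjoint_left]
  simp only [mem_Icc]
  omega

lemma Finset.subset_of_card_le_card_inter {α : Type*} [DecidableEq α] {B S : Finset α}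
    (h : #S ≤ #(B ∩ S)) : S ⊆ B :=
  inter_eq_right.1 (eq_of_subset_of_card_le inter_subset_right h)

section IntervalPartition

variable {α : Type*} [Fintype α] (lo : α → ℕ) (N : ℕ)

def nextLo (a : α) : ℕ :=
  (insert N ((univ.filter fun b => lo a < lo b).image lo)).min' (insert_nonempty _ _)

lemma nextLo_le_bound (a : α) : nextLo lo N a ≤ N :=
  min'_le _ _ (mem_insert_self _ _)

lemma nextLo_le {a b : α} (h : lo a < lo b) : nextLo lo N a ≤ lo b :=
  min'_le _ _ (mem_insert_of_mem (mem_image_of_mem lo (by simpa using h)))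

lemma lt_nextLo {a : α} {g : ℕ} (hg : g < N) (h : ∀ b, lo a < lo b → g < lo b) :
    g < nextLo lo N a := by
  simpa [nextLo, lt_min'_iff] using ⟨hg, h⟩

/-- The agent with the smallest `lo` also takes every item before it; every other agent's bundle
runs from its `lo` up to the next one. -/
theorem exists_Ico_partition_of_disjoint_Icc [Nonempty α] (hi : α → ℕ) (hle : ∀ a, lo a ≤ hi a)
    (hN : ∀ a, hi a < N)
    (hdisj : ∀ a b, a ≠ b → Disjoint (Icc (lo a) (hi a)) (Icc (lo b) (hi b))) :
    ∃ A : α → Finset ℕ, (∀ a, ∃ x y, A a = Ico x y) ∧ (∀ a b, a ≠ b → Disjoint (A a) (A b)) ∧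
      univ.biUnion A = range N ∧ ∀ a, Icc (lo a) (hi a) ⊆ A a := by
  classical
  have hsep : ∀ a b, lo a < lo b → hi a < lo b := fun a b hab => by
    by_contra! h
    exact disjoint_left.1 (hdisj a b (by rintro rfl; omega))
      (mem_Icc.2 ⟨hab.le, h⟩) (mem_Icc.2 ⟨le_rfl, hle b⟩)
  let start a := if ∀ b, lo a ≤ lo b then 0 else lo a
  have start_le : ∀ a, start a ≤ lo a := fun a => by dsimp only [start]; split_ifs <;> omega
  have disj_of_lt : ∀ a b, lo a < lo b →
      Disjoint (Ico (start a) (nextLo lo N a)) (Ico (start b) (nextLo lo N b)) := by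
    intro a b h
    have hstart : start b = lo b := if_neg fun hb => (hb a).not_gt h
    have := nextLo_le lo N h
    rw [disjoint_left]
    simp only [mem_Ico]
    omega
  refine ⟨fun a => Ico (start a) (nextLo lo N a), fun a => ⟨_, _, rfl⟩, fun a b hab => ?_, ?_,
    fun a => Icc_subset_Ico_iff (hle a) |>.2 ⟨start_le a, lt_nextLo lo N (hN a) (hsep a)⟩⟩
  · rcases lt_trichotomy (lo a) (lo b) with h | h | h
    · exact disj_of_lt a b h
    · exact (disjoint_left.1 (hdisj a b hab) (mem_Icc.2 ⟨le_rfl, hle a⟩)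
        (mem_Icc.2 ⟨h.ge, h.le.trans (hle b)⟩)).elim
    · exact (disj_of_lt b a h).symm
  ext g
  simp only [mem_biUnion, mem_univ, true_and, mem_Ico, mem_range]
  refine ⟨fun ⟨a, _, h⟩ => h.trans_le (nextLo_le_bound lo N a), fun hg => ?_⟩
  by_cases hS : ∃ b, lo b ≤ g
  · obtain ⟨a, ha, hmax⟩ := exists_max_image (univ.filter fun b : α => lo b ≤ g) lo
      (by simpa [filter_nonempty_iff] using hS)
    simp only [mem_filter, mem_univ, true_and] at ha hmax
    exact ⟨a, (start_le a).trans ha, lt_nextLo lo N hg fun b hb => by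
      by_contra! h; exact (hmax b h).not_gt hb⟩
  · push Not at hS
    obtain ⟨a, -, hmin⟩ := exists_min_image univ lo univ_nonempty
    refine ⟨a, ?_, lt_nextLo lo N hg fun b _ => hS b⟩
    simp only [start, if_pos fun b => hmin b (mem_univ b), zero_le]

end IntervalPartition

namespace Finset

variable {β γ : Type*} [Fintype β] [LinearOrder γ] (f : β → γ) (P : β → Prop) [DecidablePred P]

lemma card_filter_lt_lt_of_lt {x y : β} (hx : P x) (hxy : f x < f y) :
    #{z | P z ∧ f z < f x} < #{z | P z ∧ f z < f y} := by
  refine card_lt_card ⟨fun z hz => ?_, fun h => ?_⟩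
  · simp only [mem_filter, mem_univ, true_and] at hz ⊢
    exact ⟨hz.1, hz.2.trans hxy⟩
  · simpa using h (mem_filter.2 ⟨mem_univ x, hx, hxy⟩)

lemma card_filter_lt_lt_card {x : β} (hx : P x) : #{z | P z ∧ f z < f x} < #{z | P z} := by
  refine card_lt_card ⟨fun z hz => ?_, fun h => ?_⟩
  · simp only [mem_filter, mem_univ, true_and] at hz ⊢
    exact hz.1
  · simpa using h (mem_filter.2 ⟨mem_univ x, hx⟩)

lemma eq_of_card_filter_lt_eq (hf : Function.Injective f) {x y : β} (hx : P x) (hy : P y)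
    (h : #{z | P z ∧ f z < f x} = #{z | P z ∧ f z < f y}) : x = y := by
  rcases lt_trichotomy (f x) (f y) with hlt | heq | hgt
  · exact absurd h (card_filter_lt_lt_of_lt f P hx hlt).ne
  · exact hf heq
  · exact absurd h (card_filter_lt_lt_of_lt f P hy hgt).ne'

end Finset

section Counting

variable {n m : ℕ} (C : Fin m → Fin 3 → Fin n × Bool)

lemma occCnt_eq_card (L : Fin n × Bool) :
    occCnt n m C L.2 L.1 = #{p : Fin m × Fin 3 | C p.1 p.2 = L} := by
  simp only [occCnt, Prod.ext_iff, Fin.val_inj]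

lemma occRank_eq_card (j : Fin m) (t : Fin 3) :
    occRank C j t = #{p : Fin m × Fin 3 | C p.1 p.2 = C j t ∧ toLex p < toLex (j, t)} := by
  simp only [occRank, Prod.Lex.lt_iff, ofLex_toLex]

lemma occRank_lt_occCnt (j : Fin m) (t : Fin 3) :
    occRank C j t < occCnt n m C (C j t).2 (C j t).1 := by
  rw [occRank_eq_card, occCnt_eq_card]
  exact card_filter_lt_lt_card toLex (fun p : Fin m × Fin 3 => C p.1 p.2 = C j t) (x := (j, t)) rfl

lemma eq_of_occRank_eq {j j' : Fin m} {t t' : Fin 3} (hC : C j t = C j' t')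
    (h : occRank C j t = occRank C j' t') : (j, t) = (j', t') := by
  rw [occRank_eq_card, occRank_eq_card, ← hC] at h
  exact eq_of_card_filter_lt_eq toLex (fun p : Fin m × Fin 3 => C p.1 p.2 = C j t)
    toLex.injective rfl hC.symm h

lemma sum_occCnt (b : Bool) :
    ∑ p ∈ range n, occCnt n m C b p = #{q : Fin m × Fin 3 | (C q.1 q.2).2 = b} := by
  rw [card_eq_sum_card_fiberwise (f := fun q => ((C q.1 q.2).1 : ℕ)) (t := range n)
    fun q _ => mem_coe.2 (mem_range.2 (C q.1 q.2).1.isLt)]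
  refine sum_congr rfl fun p _ => ?_
  simp only [occCnt, filter_filter, and_comm]

lemma blockStart_succ (i : ℕ) :
    blockStart n m C (i + 1) =
      blockStart n m C i + 2 * (occCnt n m C true i + occCnt n m C false i + 3) :=
  sum_range_succ _ i

lemma blockStart_succ_le {i i' : ℕ} (h : i < i') :
    blockStart n m C (i + 1) ≤ blockStart n m C i' :=
  sum_le_sum_of_subset (range_subset_range.2 h)

lemma blockStart_self : blockStart n m C n = 6 * n + 6 * m := by
  have hcard : #{q : Fin m × Fin 3 | (C q.1 q.2).2 = true} +
      #{q : Fin m × Fin 3 | (C q.1 q.2).2 = false} = 3 * m := by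
    simpa [mul_comm] using card_filter_add_card_filter_not
      (s := (univ : Finset (Fin m × Fin 3))) fun q => (C q.1 q.2).2 = true
  simp only [blockStart, mul_add, sum_add_distrib, ← mul_sum, sum_occCnt, sum_const, card_range,
    smul_eq_mul]
  omega

end Counting

namespace EmaxReduction

abbrev Agent (n m : ℕ) := Fin n ⊕ Fin (n + 1) ⊕ Fin m × Fin 3

variable {n m : ℕ} (C : Fin m → Fin 3 → Fin n × Bool)

/-- The side of `V_i` holding the occurrence items of the literal `L = (x_i, b)` runs from
`sideStart C L` to `sideLast C L`; its two ends are assignment items of `x_i`. -/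
def sideStart (L : Fin n × Bool) : ℕ :=
  blockStart n m C L.1 + if L.2 then 0 else 2 * occCnt n m C true L.1 + 4

def sideLast (L : Fin n × Bool) : ℕ := sideStart C L + 2 * occCnt n m C L.2 L.1 + 1

def dividerStart (d : Fin (n + 1)) : ℕ :=
  if (d : ℕ) < n then blockStart n m C d + 2 * occCnt n m C true d + 2 else 6 * n + 6 * m

def clauseStart (n : ℕ) (j : Fin m) : ℕ := 6 * n + 6 * m + 2 + 4 * j

def occItem (j : Fin m) (t : Fin 3) : ℕ := sideStart C (C j t) + 2 * occRank C j t + 1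

def valued : Agent n m → Finset ℕ
  | .inl i => {sideStart C (i, true), sideLast C (i, true)} ∪
      {sideStart C (i, false), sideLast C (i, false)}
  | .inr (.inl d) => {dividerStart C d, dividerStart C d + 1}
  | .inr (.inr (j, t)) =>
      {occItem C j t, occItem C j t + 1} ∪ Ico (clauseStart n j) (clauseStart n j + 4)

lemma sum_emaxVal_eq_card (a : Agent n m) (B : Finset ℕ) :
    ∑ g ∈ B, emaxVal n m C a g = #(B ∩ valued C a) := by
  rw [← filter_mem_eq_inter, card_filter]
  refine sum_congr rfl fun g _ => ?_
  rcases a with i | d | ⟨j, t⟩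
  · simp only [emaxVal, valued, sideLast, sideStart, mem_union, mem_insert, mem_singleton]
    split_ifs <;> omega
  · simp only [emaxVal, valued, dividerStart, mem_insert, mem_singleton]
    split_ifs <;> omega
  · simp only [emaxVal, valued, occItem, sideStart, clauseStart, mem_union, mem_insert,
      mem_singleton, mem_Ico]
    split_ifs <;> omega

lemma sideStart_le_sideLast (L : Fin n × Bool) : sideStart C L ≤ sideLast C L := by
  simp only [sideLast]; omega

lemma sideLast_lt_dividerStart (i : Fin n) :
    sideLast C (i, true) < dividerStart C i.castSucc := by
  simp [sideLast, sideStart, dividerStart]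

lemma dividerStart_lt_sideStart (i : Fin n) :
    dividerStart C i.castSucc < sideStart C (i, false) := by
  simp [sideStart, dividerStart]
  omega

lemma occItems_subset_side (j : Fin m) (t : Fin 3) :
    {occItem C j t, occItem C j t + 1} ⊆ Icc (sideStart C (C j t)) (sideLast C (C j t)) := by
  have := occRank_lt_occCnt C j t
  intro g hg
  simp only [mem_insert, mem_singleton, mem_Icc, occItem, sideLast] at hg ⊢
  omega

section Forward

variable {C} {A : Agent n m → Finset ℕ}

lemma dividerItems_subset (hval : ∀ a, 2 ≤ #(A a ∩ valued C a)) (d : Fin (n + 1)) :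
    {dividerStart C d, dividerStart C d + 1} ⊆ A (.inr (.inl d)) :=
  subset_of_card_le_card_inter (card_le_two.trans (hval _))

/-- The bundle of `x_i` is an interval avoiding the divider item held by `d_i`, so it meets only
one side of `V_i`, and it needs both of that side's assignment items. -/
lemma exists_side_subset (hIco : ∀ a, ∃ x y, A a = Ico x y)
    (hdis : ∀ a b, a ≠ b → Disjoint (A a) (A b)) (hval : ∀ a, 2 ≤ #(A a ∩ valued C a))
    (i : Fin n) : ∃ b, Icc (sideStart C (i, b)) (sideLast C (i, b)) ⊆ A (.inl i) := by
  set L : Finset ℕ := {sideStart C (i, true), sideLast C (i, true)}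
  set R : Finset ℕ := {sideStart C (i, false), sideLast C (i, false)}
  have hp : dividerStart C i.castSucc ∉ A (.inl i) := fun h =>
    disjoint_left.1 (hdis _ (.inr (.inl i.castSucc)) Sum.inl_ne_inr) h
      (dividerItems_subset hval _ (mem_insert_self _ _))
  have hsplit : A (.inl i) ∩ L = ∅ ∨ A (.inl i) ∩ R = ∅ := by
    by_contra! h
    obtain ⟨⟨u, hu⟩, ⟨v, hv⟩⟩ := h
    simp only [mem_inter, L, R, mem_insert, mem_singleton] at hu hv
    have := sideLast_lt_dividerStart C i
    have := dividerStart_lt_sideStart C i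
    have := sideStart_le_sideLast C (i, true)
    have := sideStart_le_sideLast C (i, false)
    exact hp (Icc_subset_of_mem_Ico (hIco _) hu.1 hv.1 (mem_Icc.2 (by omega)))
  have hval' : 2 ≤ #(A (.inl i) ∩ L ∪ A (.inl i) ∩ R) := by
    have := hval (.inl i)
    simp only [valued] at this
    rwa [← inter_union_distrib_left]
  rcases hsplit with h | h
  · rw [h, empty_union] at hval'
    have hR := subset_of_card_le_card_inter (card_le_two.trans hval')
    exact ⟨false, Icc_subset_of_mem_Ico (hIco _) (hR (mem_insert_self _ _))
      (hR (mem_insert_of_mem (mem_singleton_self _)))⟩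
  · rw [h, union_empty] at hval'
    have hL := subset_of_card_le_card_inter (card_le_two.trans hval')
    exact ⟨true, Icc_subset_of_mem_Ico (hIco _) (hL (mem_insert_self _ _))
      (hL (mem_insert_of_mem (mem_singleton_self _)))⟩

lemma two_le_card_clauseItems (hdis : ∀ a b, a ≠ b → Disjoint (A a) (A b))
    (hval : ∀ a, 2 ≤ #(A a ∩ valued C a)) {j : Fin m} {t : Fin 3}
    (hside : Icc (sideStart C (C j t)) (sideLast C (C j t)) ⊆ A (.inl (C j t).1)) :
    2 ≤ #(A (.inr (.inr (j, t))) ∩ Ico (clauseStart n j) (clauseStart n j + 4)) := by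
  refine (hval (.inr (.inr (j, t)))).trans (card_le_card fun g hg => ?_)
  simp only [valued, mem_inter, mem_union] at hg ⊢
  refine ⟨hg.1, hg.2.resolve_left fun hocc => ?_⟩
  exact disjoint_left.1 (hdis _ _ Sum.inl_ne_inr) (hside (occItems_subset_side C j t hocc)) hg.1

theorem satisfiable_of_allocation (hIco : ∀ a, ∃ x y, A a = Ico x y)
    (hdis : ∀ a b, a ≠ b → Disjoint (A a) (A b)) (hval : ∀ a, 2 ≤ ∑ g ∈ A a, emaxVal n m C a g) :
    ∃ σ : Fin n → Bool, ∀ j : Fin m, ∃ t : Fin 3, σ (C j t).1 = (C j t).2 := by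
  simp only [sum_emaxVal_eq_card] at hval
  let σ i := decide (Icc (sideStart C (i, false)) (sideLast C (i, false)) ⊆ A (.inl i))
  have hσ : ∀ i, Icc (sideStart C (i, !σ i)) (sideLast C (i, !σ i)) ⊆ A (.inl i) := by
    intro i
    by_cases h : Icc (sideStart C (i, false)) (sideLast C (i, false)) ⊆ A (.inl i)
    · simp [σ, h]
    · obtain ⟨b, hb⟩ := exists_side_subset hIco hdis hval i
      cases b
      · exact absurd hb h
      · simpa [σ, h]
  refine ⟨σ, fun j => ?_⟩
  by_contra! hj
  set Q := Ico (clauseStart n j) (clauseStart n j + 4)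
  have htwo : ∀ t, 2 ≤ #(A (.inr (.inr (j, t))) ∩ Q) := fun t => by
    have hside := hσ (C j t).1
    rw [← Bool.eq_not.2 (hj t).symm] at hside
    exact two_le_card_clauseItems hdis hval hside
  have hpair : ((univ : Finset (Fin 3)) : Set (Fin 3)).PairwiseDisjoint
      fun t => A (.inr (.inr (j, t))) ∩ Q := fun t _ t' _ htt =>
    (hdis _ _ fun h => htt (by simpa using h)).mono inter_subset_left inter_subset_left
  have hle : ∑ t, #(A (.inr (.inr (j, t))) ∩ Q) ≤ 4 := by
    rw [← card_biUnion hpair]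
    exact (card_le_card (biUnion_subset.2 fun t _ => inter_subset_right)).trans (by simp [Q])
  have := sum_le_sum fun t (_ : t ∈ univ) => htwo t
  simp only [sum_const, card_univ, Fintype.card_fin, smul_eq_mul] at this
  omega

end Forward

section Backward

variable (σ : Fin n → Bool)

def unsatRank (j : Fin m) (t : Fin 3) : ℕ := #{t' | σ (C j t').1 ≠ (C j t').2 ∧ t' < t}

lemma unsatRank_le_one (hσ : ∀ j : Fin m, ∃ t : Fin 3, σ (C j t).1 = (C j t).2) {j : Fin m}
    {t : Fin 3} (ht : σ (C j t).1 ≠ (C j t).2) : unsatRank C σ j t ≤ 1 := by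
  obtain ⟨t₀, ht₀⟩ := hσ j
  have hlt := card_filter_lt_lt_card id (fun t' => σ (C j t').1 ≠ (C j t').2) ht
  have hcard : #{t' | σ (C j t').1 ≠ (C j t').2} < 3 := by
    simpa using card_lt_card (filter_ssubset.2 ⟨t₀, mem_univ _, not_not.2 ht₀⟩)
  exact Nat.le_of_lt_succ (hlt.trans_le (Nat.le_of_lt_succ hcard))

lemma unsatRank_injective {j : Fin m} {t t' : Fin 3} (ht : σ (C j t).1 ≠ (C j t).2)
    (ht' : σ (C j t').1 ≠ (C j t').2) (h : unsatRank C σ j t = unsatRank C σ j t') : t = t' :=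
  eq_of_card_filter_lt_eq id (fun t' => σ (C j t').1 ≠ (C j t').2) Function.injective_id ht ht' h

/-- A zone is a side of a block, named by its literal, the two items valued by a divider agent,
or the four clause items of a clause. -/
abbrev Zone (n m : ℕ) := (Fin n × Bool) ⊕ Fin (n + 1) ⊕ Fin m

def zoneLo : Zone n m → ℕ
  | .inl L => sideStart C L
  | .inr (.inl d) => dividerStart C d
  | .inr (.inr j) => clauseStart n j

def zoneHi : Zone n m → ℕ
  | .inl L => sideLast C L
  | .inr (.inl d) => dividerStart C d + 1
  | .inr (.inr j) => clauseStart n j + 3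

/-- `n` stands for the final region `6n + 6m, …` of the path. -/
def zoneBlock : Zone n m → ℕ
  | .inl L => L.1
  | .inr (.inl d) => d
  | .inr (.inr _) => n

lemma zoneBlock_le (z : Zone n m) : zoneBlock z ≤ n := by
  rcases z with L | d | j
  · exact L.1.isLt.le
  · exact Nat.lt_succ_iff.1 d.isLt
  · exact le_rfl

lemma blockStart_zoneBlock_le (z : Zone n m) : blockStart n m C (zoneBlock z) ≤ zoneLo C z := by
  have := blockStart_self C
  rcases z with L | d | j
  · simp [zoneBlock, zoneLo, sideStart]
  · simp only [zoneBlock, zoneLo, dividerStart]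
    split_ifs with hd
    · omega
    · rw [show (d : ℕ) = n by omega, this]
  · simp only [zoneBlock, zoneLo, clauseStart]
    omega

lemma zoneHi_lt_blockStart (z : Zone n m) (hz : zoneBlock z < n) :
    zoneHi C z < blockStart n m C (zoneBlock z + 1) := by
  rcases z with ⟨i, b⟩ | d | j
  · have := blockStart_succ C i
    cases b <;> simp only [zoneBlock, zoneHi, sideLast, sideStart] <;> simp <;> omega
  · have := blockStart_succ C d
    simp only [zoneBlock] at hz
    simp only [zoneBlock, zoneHi, dividerStart, if_pos hz]
    omega
  · simp [zoneBlock] at hz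

lemma zoneHi_lt (z : Zone n m) : zoneHi C z < 6 * n + 10 * m + 2 := by
  by_cases hz : zoneBlock z < n
  · have := blockStart_succ_le C hz
    have := zoneHi_lt_blockStart C z hz
    rw [blockStart_self] at *
    omega
  · rcases z with ⟨i, b⟩ | d | j
    · simp [zoneBlock] at hz
    · simp only [zoneBlock] at hz
      simp only [zoneHi, dividerStart, if_neg hz]
      omega
    · simp only [zoneHi, clauseStart]
      omega

lemma zoneHi_lt_zoneLo_of_zoneBlock_lt {z z' : Zone n m} (h : zoneBlock z < zoneBlock z') :
    zoneHi C z < zoneLo C z' :=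
  (zoneHi_lt_blockStart C z (h.trans_le (zoneBlock_le z'))).trans_le
    ((blockStart_succ_le C h).trans (blockStart_zoneBlock_le C z'))

lemma zone_separated_of_zoneBlock_eq {z z' : Zone n m} (h : z ≠ z')
    (heq : zoneBlock z = zoneBlock z') :
    zoneHi C z < zoneLo C z' ∨ zoneHi C z' < zoneLo C z := by
  rcases z with ⟨i, _ | _⟩ | d | j <;> rcases z' with ⟨i', _ | _⟩ | d' | j' <;>
    simp only [zoneBlock] at heq <;>
    simp only [zoneLo, zoneHi, sideLast, sideStart, dividerStart, clauseStart] <;>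
    simp_all [Prod.ext_iff, Fin.ext_iff] <;> (try split_ifs) <;> omega

lemma zone_disjoint {z z' : Zone n m} (h : z ≠ z') :
    Disjoint (Icc (zoneLo C z) (zoneHi C z)) (Icc (zoneLo C z') (zoneHi C z')) := by
  apply disjoint_Icc_of_lt_or_lt
  rcases lt_trichotomy (zoneBlock z) (zoneBlock z') with hlt | heq | hgt
  · exact .inl (zoneHi_lt_zoneLo_of_zoneBlock_lt C hlt)
  · exact zone_separated_of_zoneBlock_eq C h heq
  · exact .inr (zoneHi_lt_zoneLo_of_zoneBlock_lt C hgt)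

def zone : Agent n m → Zone n m
  | .inl i => .inl (i, !σ i)
  | .inr (.inl d) => .inr (.inl d)
  | .inr (.inr (j, t)) => if σ (C j t).1 = (C j t).2 then .inl (C j t) else .inr (.inr j)

def coreLo : Agent n m → ℕ
  | .inl i => sideStart C (i, !σ i)
  | .inr (.inl d) => dividerStart C d
  | .inr (.inr (j, t)) =>
      if σ (C j t).1 = (C j t).2 then occItem C j t else clauseStart n j + 2 * unsatRank C σ j t

def coreHi : Agent n m → ℕ
  | .inl i => sideLast C (i, !σ i)
  | .inr a => coreLo C σ (.inr a) + 1

lemma coreLo_lt_coreHi (a : Agent n m) : coreLo C σ a < coreHi C σ a := by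
  rcases a with i | a
  · simp only [coreLo, coreHi, sideLast]
    omega
  · exact Nat.lt_succ_self _

variable {σ}

lemma core_subset_zone (hσ : ∀ j : Fin m, ∃ t : Fin 3, σ (C j t).1 = (C j t).2) (a : Agent n m) :
    zoneLo C (zone C σ a) ≤ coreLo C σ a ∧ coreHi C σ a ≤ zoneHi C (zone C σ a) := by
  rcases a with i | d | ⟨j, t⟩
  · simp [zone, zoneLo, zoneHi, coreLo, coreHi]
  · simp [zone, zoneLo, zoneHi, coreLo, coreHi]
  · by_cases ht : σ (C j t).1 = (C j t).2
    · have := occItems_subset_side C j t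
      simp only [insert_subset_iff, singleton_subset_iff, mem_Icc] at this
      simp only [zone, zoneLo, zoneHi, coreLo, coreHi, if_pos ht]
      omega
    · have := unsatRank_le_one C σ hσ ht
      simp only [zone, zoneLo, zoneHi, coreLo, coreHi, if_neg ht]
      omega

lemma coreEnds_subset_valued (hσ : ∀ j : Fin m, ∃ t : Fin 3, σ (C j t).1 = (C j t).2)
    (a : Agent n m) :
    {coreLo C σ a, coreHi C σ a} ⊆ valued C a := by
  rcases a with i | d | ⟨j, t⟩
  · cases hi : σ i <;> simp [coreLo, coreHi, valued, hi, insert_subset_iff]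
  · simp [coreLo, coreHi, valued]
  · by_cases ht : σ (C j t).1 = (C j t).2
    · simp [coreLo, coreHi, valued, if_pos ht]
    · have := unsatRank_le_one C σ hσ ht
      intro g hg
      simp only [coreLo, coreHi, if_neg ht, mem_insert, mem_singleton] at hg
      simp only [valued, mem_union, mem_Ico]
      omega

/-- Occurrence agents sharing a zone are ordered by rank, so their cores are disjoint. -/
lemma core_disjoint_of_zone_eq {a b : Agent n m} (hab : a ≠ b) (hz : zone C σ a = zone C σ b) :
    Disjoint (Icc (coreLo C σ a) (coreHi C σ a)) (Icc (coreLo C σ b) (coreHi C σ b)) := by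
  apply disjoint_Icc_of_lt_or_lt
  rcases a with i | d | ⟨j, t⟩ <;> rcases b with i' | d' | ⟨j', t'⟩ <;> simp only [zone] at hz
  · obtain rfl : i = i' := congrArg Prod.fst (Sum.inl_injective hz)
    exact absurd rfl hab
  · simp at hz
  · split_ifs at hz with ht'
    rw [← Sum.inl_injective hz] at ht'
    simp at ht'
  · simp at hz
  · obtain rfl : d = d' := by simpa using hz
    exact absurd rfl hab
  · split_ifs at hz
    simp at hz
  · split_ifs at hz with ht
    rw [Sum.inl_injective hz] at ht
    simp at ht
  · split_ifs at hz
    simp at hz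
  · split_ifs at hz with ht ht' ht'
    · have hC := Sum.inl_injective hz
      have hr : occRank C j t ≠ occRank C j' t' := fun h => hab (by rw [eq_of_occRank_eq C hC h])
      simp only [coreLo, coreHi, occItem, if_pos ht, if_pos ht']
      rw [hC]
      omega
    · obtain rfl : j = j' := by simpa using hz
      have hr : unsatRank C σ j t ≠ unsatRank C σ j t' := fun h =>
        hab (by rw [unsatRank_injective C σ ht ht' h])
      simp only [coreLo, coreHi, if_neg ht, if_neg ht']
      omega

lemma core_disjoint (hσ : ∀ j : Fin m, ∃ t : Fin 3, σ (C j t).1 = (C j t).2) {a b : Agent n m}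
    (hab : a ≠ b) :
    Disjoint (Icc (coreLo C σ a) (coreHi C σ a)) (Icc (coreLo C σ b) (coreHi C σ b)) := by
  by_cases hz : zone C σ a = zone C σ b
  · exact core_disjoint_of_zone_eq C hab hz
  · obtain ⟨hloa, hhia⟩ := core_subset_zone C hσ a
    obtain ⟨hlob, hhib⟩ := core_subset_zone C hσ b
    exact (zone_disjoint C hz).mono (Icc_subset_Icc hloa hhia) (Icc_subset_Icc hlob hhib)

theorem allocation_of_satisfiable (hσ : ∀ j : Fin m, ∃ t : Fin 3, σ (C j t).1 = (C j t).2) :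
    ∃ A : Agent n m → Finset ℕ, (∀ a, ∃ x y, A a = Ico x y) ∧
      (∀ a b, a ≠ b → Disjoint (A a) (A b)) ∧ univ.biUnion A = range (6 * n + 10 * m + 2) ∧
      ∀ a, 2 ≤ ∑ g ∈ A a, emaxVal n m C a g := by
  obtain ⟨A, hIco, hdis, hcov, hcore⟩ := exists_Ico_partition_of_disjoint_Icc
    (coreLo C σ) _ (coreHi C σ) (fun a => (coreLo_lt_coreHi C σ a).le)
    (fun a => (core_subset_zone C hσ a).2.trans_lt (zoneHi_lt C _))
    (fun a b hab => core_disjoint C hσ hab)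
  refine ⟨A, hIco, hdis, hcov, fun a => ?_⟩
  have hends : {coreLo C σ a, coreHi C σ a} ⊆ A a :=
    (insert_subset_iff.2 ⟨left_mem_Icc.2 (coreLo_lt_coreHi C σ a).le,
      singleton_subset_iff.2 (right_mem_Icc.2 (coreLo_lt_coreHi C σ a).le)⟩).trans (hcore a)
  rw [sum_emaxVal_eq_card, ← card_pair (coreLo_lt_coreHi C σ a).ne]
  exact card_le_card (subset_inter hends (coreEnds_subset_valued C hσ a))

end Backward

end EmaxReduction

theorem emax_reduction_from_3SAT (n m : ℕ) (C : Fin m → Fin 3 → Fin n × Bool) :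
    ((∃ A : (Fin n ⊕ Fin (n + 1) ⊕ Fin m × Fin 3) → Finset ℕ,
        (∀ i, ∃ a b, A i = Finset.Ico a b) ∧
        (∀ i i', i ≠ i' → Disjoint (A i) (A i')) ∧
        Finset.univ.biUnion A = Finset.range (6 * n + 10 * m + 2) ∧
        ∀ i, 2 ≤ ∑ g ∈ A i, emaxVal n m C i g) ↔
      (∃ σ : Fin n → Bool, ∀ j : Fin m, ∃ t : Fin 3, σ (C j t).1 = (C j t).2)) ∧
    (¬(∃ σ : Fin n → Bool, ∀ j : Fin m, ∃ t : Fin 3, σ (C j t).1 = (C j t).2) →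
      ∀ A : (Fin n ⊕ Fin (n + 1) ⊕ Fin m × Fin 3) → Finset ℕ,
        (∀ i, ∃ a b, A i = Finset.Ico a b) →
        (∀ i i', i ≠ i' → Disjoint (A i) (A i')) →
        Finset.univ.biUnion A = Finset.range (6 * n + 10 * m + 2) →
        ∃ i, ∑ g ∈ A i, emaxVal n m C i g ≤ 1) := by
  refine ⟨⟨fun ⟨A, hIco, hdis, _, hval⟩ =>
      EmaxReduction.satisfiable_of_allocation hIco hdis hval,
    fun ⟨σ, hσ⟩ => EmaxReduction.allocation_of_satisfiable C hσ⟩,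
    fun hunsat A hIco hdis _ => ?_⟩
  by_contra! hlow
  exact hunsat (EmaxReduction.satisfiable_of_allocation hIco hdis hlow)
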